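/- arXiv:1512.03985 — 4 statements merged into one kernel-verified Lean document; each statement's English description precedes it below -/
import Mathlib

section
/- For any g_r1, g_r2 > 0, the function (R21, R22) ↦ (2^(R21) - 1)/g_r1 + max((2^(R22) - 1)/g_r2, 2^(R21)(2^(R22) - 1)/g_r1) is convex on the domain R21, R22 ≥ 0. -/
/-!
Using `2^{R21} (2^{R22} - 1) = 2^{R21+R22} - 2^{R21}`, the first summand can be moved inside
the maximum, which becomes the maximum of `(2^{R21} - 1)/g_r1 + (2^{R22} - 1)/g_r2` and
`(2^{R21+R22} - 1)/g_r1`. Both are nonnegative combinations of exponentials of linear forms,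
hence convex (on the whole plane), and a pointwise maximum of convex functions is convex.
-/

open Set

lemma convexOn_rpow_sub_one_div_comp_linearMap {E : Type*} [AddCommGroup E] [Module ℝ E]
    {b c : ℝ} (hb : 0 < b) (hc : 0 ≤ c) (L : E →ₗ[ℝ] ℝ) :
    ConvexOn ℝ univ fun x => (b ^ L x - 1) / c := by
  have hexp : ConvexOn ℝ univ fun x => b ^ L x := (convexOn_rpow_left hb).comp_linearMap L
  refine ((hexp.add_const (-1)).smul (inv_nonneg.mpr hc)).congr fun x _ => ?_
  simp only [smul_eq_mul, Pi.add_apply]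
  ring

lemma rpow_sub_one_div_add_max {b : ℝ} (hb : 0 < b) (c x y u : ℝ) :
    (b ^ x - 1) / c + max u (b ^ x * (b ^ y - 1) / c) =
      max ((b ^ x - 1) / c + u) ((b ^ (x + y) - 1) / c) := by
  rw [← max_add_add_left, Real.rpow_add hb]
  ring_nf

/-- The DNC downlink total power function is convex on the nonnegative quadrant. -/
theorem stmt_5 (gr1 gr2 : ℝ) (hg1 : 0 < gr1) (hg2 : 0 < gr2) :
    ConvexOn ℝ {p : ℝ × ℝ | 0 ≤ p.1 ∧ 0 ≤ p.2}
      (fun p : ℝ × ℝ =>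
        ((2:ℝ) ^ p.1 - 1) / gr1 +
          max (((2:ℝ) ^ p.2 - 1) / gr2) ((2:ℝ) ^ p.1 * ((2:ℝ) ^ p.2 - 1) / gr1)) := by
  simp only [rpow_sub_one_div_add_max two_pos]
  have hsum :=
    (convexOn_rpow_sub_one_div_comp_linearMap two_pos hg1.le (LinearMap.fst ℝ ℝ ℝ)).add
      (convexOn_rpow_sub_one_div_comp_linearMap two_pos hg2.le (LinearMap.snd ℝ ℝ ℝ))
  have htotal := convexOn_rpow_sub_one_div_comp_linearMap two_pos hg1.le
    (LinearMap.fst ℝ ℝ ℝ + LinearMap.snd ℝ ℝ ℝ)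
  exact (hsum.sup htotal).subset (subset_univ _) (convex_Ici 0)
end

section
/- In the two-user multiple-access power-minimization Lagrangian with multipliers β11, β12 > 0 and gains g1 > g2 > 0: if β12 ≤ β11 then at the stationary point user 2 is allocated zero power and user 1 gets P11 = (β11·log₂e - 1/g1)⁺; i.e., the function (P1, P2) ↦ P1 + P2 - β11·log₂(1 + P1·g1/(1 + P2·g2)) - β12·log₂(1 + P2·g2) over P1, P2 ≥ 0 is minimized with P2 = 0 when β12 ≤ β11. -/
/-!
Since `log₂(1 + P₁g₁/(1 + P₂g₂)) = log₂(1 + P₁g₁ + P₂g₂) - log₂(1 + P₂g₂)`, the Lagrangian equals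
`P₁ + P₂ - β₁₁ log₂(1 + P₁g₁ + P₂g₂) + (β₁₁ - β₁₂) log₂(1 + P₂g₂)`. For `β₁₂ ≤ β₁₁` the last term
is nonnegative, and `g₂ < g₁` gives `1 + P₁g₁ + P₂g₂ ≤ 1 + (P₁ + P₂)g₁`, so the Lagrangian is at
least `t - β₁₁ log₂(1 + t g₁)` with `t = P₁ + P₂`. This one-variable function is convex and is
minimized on `t ≥ 0` at the water-filling level `(β₁₁ log₂ e - 1/g₁)⁺`, which is exactly its value
at `(P₁, P₂) = (t, 0)`.
-/

open Real Set

lemma Real.log_le_log_add_div_sub_one {c y : ℝ} (hc : 0 < c) (hy : 0 < y) :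
    log y ≤ log c + y / c - 1 := by
  have h := log_le_sub_one_of_pos (div_pos hy hc)
  rw [log_div hy.ne' hc.ne'] at h
  linarith

lemma isMinOn_sub_mul_log_one_add_mul {a g : ℝ} (ha : 0 ≤ a) (hg : 0 < g) :
    IsMinOn (fun t => t - a * log (1 + t * g)) (Ici 0) (max (a - 1 / g) 0) := by
  rw [isMinOn_iff]
  intro t (ht : 0 ≤ t)
  have hy : 0 < 1 + t * g := by positivity
  rcases le_or_gt a (1 / g) with hag | hag
  · have hag' : a * g ≤ 1 := by rwa [le_div_iff₀ hg] at hag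
    have hlog : log (1 + t * g) ≤ t * g := by
      linarith [log_le_sub_one_of_pos hy]
    rw [max_eq_right (sub_nonpos.2 hag), zero_mul, add_zero, log_one, mul_zero, zero_sub,
      neg_le_sub_iff_le_add, add_zero]
    calc a * log (1 + t * g) ≤ a * (t * g) := mul_le_mul_of_nonneg_left hlog ha
      _ = (a * g) * t := by ring
      _ ≤ t := mul_le_of_le_one_left ht hag'
  · have hag' : 0 < a * g := by rw [div_lt_iff₀ hg] at hag; linarith
    have hlevel : 1 + (a - 1 / g) * g = a * g := by field_simp; ring
    have htangent := log_le_log_add_div_sub_one hag' hy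
    have hscale : a * ((1 + t * g) / (a * g)) = t + 1 / g := by
      field_simp [(pos_of_mul_pos_left hag' hg.le).ne']
      ring
    rw [max_eq_left (sub_pos.2 hag).le, hlevel]
    linarith [mul_le_mul_of_nonneg_left htangent ha]

lemma isMinOn_sub_mul_logb_one_add_mul {b β g : ℝ} (hb : 1 < b) (hβ : 0 ≤ β) (hg : 0 < g) :
    IsMinOn (fun t => t - β * logb b (1 + t * g)) (Ici 0) (max (β / log b - 1 / g) 0) := by
  have hlogb : ∀ x, β * logb b x = β / log b * log x := fun x => by
    rw [logb, mul_div_assoc', div_mul_eq_mul_div]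
  simp only [hlogb]
  exact isMinOn_sub_mul_log_one_add_mul (div_nonneg hβ (log_pos hb).le) hg

lemma Real.logb_one_add_div {b r x : ℝ} (hr : 0 < r) (hrx : 0 < r + x) :
    logb b (1 + x / r) = logb b (r + x) - logb b r := by
  rw [← logb_div hrx.ne' hr.ne', add_div, div_self hr.ne']

theorem stmt_15_general (g1 g2 β11 β12 : ℝ) (hg2 : 0 < g2) (hg : g2 < g1)
    (hβ11 : 0 < β11) (hle : β12 ≤ β11) :
    IsMinOn
      (fun p : ℝ × ℝ =>
        p.1 + p.2 - β11 * Real.logb 2 (1 + p.1 * g1 / (1 + p.2 * g2))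
          - β12 * Real.logb 2 (1 + p.2 * g2))
      {p : ℝ × ℝ | 0 ≤ p.1 ∧ 0 ≤ p.2}
      (max (β11 / Real.log 2 - 1 / g1) 0, 0) := by
  rintro ⟨P1, P2⟩ ⟨hP1 : 0 ≤ P1, hP2 : 0 ≤ P2⟩
  have hg1 : 0 < g1 := hg2.trans hg
  have hr : 0 < 1 + P2 * g2 := by positivity
  have hchain := logb_one_add_div (b := 2) hr (x := P1 * g1) (by positivity)
  have hmono : logb 2 (1 + P2 * g2 + P1 * g1) ≤ logb 2 (1 + (P1 + P2) * g1) :=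
    logb_le_logb_of_le one_lt_two (by positivity) (by nlinarith)
  have hweight : β12 * logb 2 (1 + P2 * g2) ≤ β11 * logb 2 (1 + P2 * g2) :=
    mul_le_mul_of_nonneg_right hle (logb_nonneg one_lt_two (by nlinarith))
  have hmin := isMinOn_sub_mul_logb_one_add_mul one_lt_two hβ11.le hg1
    (mem_Ici.2 (by positivity : 0 ≤ P1 + P2))
  simp only [mem_ofPred_eq, zero_mul, add_zero, div_one, logb_one, mul_zero, sub_zero] at hmin ⊢
  rw [hchain]
  linarith [mul_le_mul_of_nonneg_left hmono hβ11.le]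

/-- Lemma 1, case 1: when `β12 ≤ β11` (with `g1 > g2 > 0`), the multi-access
Lagrangian is minimized over the nonnegative quadrant with user 2 silent and
`P11 = (β11·log₂e - 1/g1)⁺`. -/
theorem stmt_15 (g1 g2 β11 β12 : ℝ) (hg2 : 0 < g2) (hg : g2 < g1)
    (hβ11 : 0 < β11) (hβ12 : 0 < β12) (hle : β12 ≤ β11) :
    IsMinOn
      (fun p : ℝ × ℝ =>
        p.1 + p.2 - β11 * Real.logb 2 (1 + p.1 * g1 / (1 + p.2 * g2))
          - β12 * Real.logb 2 (1 + p.2 * g2))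
      {p : ℝ × ℝ | 0 ≤ p.1 ∧ 0 ≤ p.2}
      (max (β11 / Real.log 2 - 1 / g1) 0, 0) :=
  stmt_15_general g1 g2 β11 β12 hg2 hg hβ11 hle
end

section
/- For gains g1 > g2 > 0 and multipliers β11, β12 with β11·g1 > β12·g2 and β12 - β11 > (g1 - g2)/(g1·g2), the interior stationary point of the Lagrangian P1 + P2 - β11·R11 - β12·R12 (with R11 = log₂(1 + P1·g1/(1 + P2·g2)), R12 = log₂(1 + P2·g2)) is P1* = (β11·g1 - β12·g2)·log₂e/(g1 - g2) and P2* = (β12 - β11)·g1·log₂e/(g1 - g2) - 1/g2, and both values are strictly positive under the stated conditions. -/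
/-!
Writing `A = 1 + P₂g₂` and `S = 1 + P₁g₁ + P₂g₂`, the Lagrangian equals
`P₁ + P₂ - β₁₁ log₂ S + (β₁₁ - β₁₂) log₂ A`, so its partial derivatives are
`1 - β₁₁g₁ / (S ln 2)` and `1 - β₁₁g₂ / (S ln 2) - (β₁₂ - β₁₁)g₂ / (A ln 2)`.
They vanish exactly when `S ln 2 = β₁₁g₁` and `A ln 2 (g₁ - g₂) = (β₁₂ - β₁₁)g₁g₂`,
which is what the closed forms of `P₁*` and `P₂*` solve. Then `P₁* > 0` is the
first hypothesis, and `P₂* > 0`, i.e. `A > 1`, follows from `A ln 2 > 1` (the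
second hypothesis) and `ln 2 < 1`.
-/

open Real

theorem HasDerivAt.logb {f : ℝ → ℝ} {f' x : ℝ} (b : ℝ) (hf : HasDerivAt f f' x)
    (hx : f x ≠ 0) : HasDerivAt (fun y => logb b (f y)) (f' / (f x * Real.log b)) x := by
  simpa only [Real.logb, div_div] using (hf.log hx).div_const (Real.log b)

noncomputable def lagrangian (g1 g2 β11 β12 P1 P2 : ℝ) : ℝ :=
  P1 + P2 - β11 * logb 2 (1 + P1 * g1 / (1 + P2 * g2)) - β12 * logb 2 (1 + P2 * g2)

section Lagrangian

variable {g1 g2 β11 β12 P1 P2 : ℝ}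

theorem lagrangian_eq (hA : 1 + P2 * g2 ≠ 0) (hS : 1 + P1 * g1 + P2 * g2 ≠ 0) :
    lagrangian g1 g2 β11 β12 P1 P2 =
      P1 + P2 - β11 * logb 2 (1 + P1 * g1 + P2 * g2) + (β11 - β12) * logb 2 (1 + P2 * g2) := by
  have hquot : 1 + P1 * g1 / (1 + P2 * g2) = (1 + P1 * g1 + P2 * g2) / (1 + P2 * g2) := by
    field_simp
    ring
  rw [lagrangian, hquot, logb_div hS hA]
  ring

theorem hasDerivAt_lagrangian_fst (hA : 1 + P2 * g2 ≠ 0) (hS : 1 + P1 * g1 + P2 * g2 ≠ 0) :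
    HasDerivAt (fun P1 => lagrangian g1 g2 β11 β12 P1 P2)
      (1 - β11 * g1 / ((1 + P1 * g1 + P2 * g2) * log 2)) P1 := by
  have hS_near : ∀ᶠ Q in nhds P1, 1 + Q * g1 + P2 * g2 ≠ 0 :=
    (by fun_prop : Continuous fun Q => 1 + Q * g1 + P2 * g2).continuousAt.eventually_ne hS
  have hsum : HasDerivAt (fun Q => 1 + Q * g1 + P2 * g2) g1 P1 := by
    simpa using (((hasDerivAt_id P1).mul_const g1).const_add 1).add_const (P2 * g2)
  have hsplit := (((hasDerivAt_id P1).add_const P2).sub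
    ((hsum.logb 2 hS).const_mul β11)).add_const ((β11 - β12) * logb 2 (1 + P2 * g2))
  refine (hsplit.congr_of_eventuallyEq ?_).congr_deriv (by ring)
  filter_upwards [hS_near] with Q hQ using lagrangian_eq hA hQ

theorem hasDerivAt_lagrangian_snd (hA : 1 + P2 * g2 ≠ 0) (hS : 1 + P1 * g1 + P2 * g2 ≠ 0) :
    HasDerivAt (fun P2 => lagrangian g1 g2 β11 β12 P1 P2)
      (1 - β11 * g2 / ((1 + P1 * g1 + P2 * g2) * log 2)
        - (β12 - β11) * g2 / ((1 + P2 * g2) * log 2)) P2 := by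
  have hA_near : ∀ᶠ Q in nhds P2, 1 + Q * g2 ≠ 0 :=
    (by fun_prop : Continuous fun Q => 1 + Q * g2).continuousAt.eventually_ne hA
  have hS_near : ∀ᶠ Q in nhds P2, 1 + P1 * g1 + Q * g2 ≠ 0 :=
    (by fun_prop : Continuous fun Q => 1 + P1 * g1 + Q * g2).continuousAt.eventually_ne hS
  have hone : HasDerivAt (fun Q => 1 + Q * g2) g2 P2 := by
    simpa using ((hasDerivAt_id P2).mul_const g2).const_add 1
  have hsum : HasDerivAt (fun Q => 1 + P1 * g1 + Q * g2) g2 P2 := by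
    simpa using ((hasDerivAt_id P2).mul_const g2).const_add (1 + P1 * g1)
  have hsplit := (((hasDerivAt_id P2).const_add P1).sub
    ((hsum.logb 2 hS).const_mul β11)).add ((hone.logb 2 hA).const_mul (β11 - β12))
  refine (hsplit.congr_of_eventuallyEq ?_).congr_deriv (by ring)
  filter_upwards [hA_near, hS_near] with Q hA' hS' using lagrangian_eq hA' hS'

theorem hasDerivAt_lagrangian_fst_eq_zero (hA : 1 + P2 * g2 ≠ 0)
    (hS : 1 + P1 * g1 + P2 * g2 ≠ 0) (hS_eq : (1 + P1 * g1 + P2 * g2) * log 2 = β11 * g1) :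
    HasDerivAt (fun P1 => lagrangian g1 g2 β11 β12 P1 P2) 0 P1 := by
  have hβ11 : β11 * g1 ≠ 0 := hS_eq ▸ mul_ne_zero hS (log_pos one_lt_two).ne'
  refine (hasDerivAt_lagrangian_fst hA hS).congr_deriv ?_
  rw [hS_eq, div_self hβ11, sub_self]

theorem hasDerivAt_lagrangian_snd_eq_zero (hA : 1 + P2 * g2 ≠ 0)
    (hS : 1 + P1 * g1 + P2 * g2 ≠ 0) (hg : g1 ≠ g2)
    (hS_eq : (1 + P1 * g1 + P2 * g2) * log 2 = β11 * g1)
    (hA_eq : (1 + P2 * g2) * log 2 * (g1 - g2) = (β12 - β11) * g1 * g2) :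
    HasDerivAt (fun P2 => lagrangian g1 g2 β11 β12 P1 P2) 0 P2 := by
  have hL : log 2 ≠ 0 := (log_pos one_lt_two).ne'
  have hd : g1 - g2 ≠ 0 := sub_ne_zero.mpr hg
  have hβ11 : β11 ≠ 0 := left_ne_zero_of_mul (hS_eq ▸ mul_ne_zero hS hL)
  have hrhs : (β12 - β11) * g1 * g2 ≠ 0 := hA_eq ▸ mul_ne_zero (mul_ne_zero hA hL) hd
  have hβ : β12 - β11 ≠ 0 := left_ne_zero_of_mul (left_ne_zero_of_mul hrhs)
  have hg1 : g1 ≠ 0 := right_ne_zero_of_mul (left_ne_zero_of_mul hrhs)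
  have hg2 : g2 ≠ 0 := right_ne_zero_of_mul hrhs
  refine (hasDerivAt_lagrangian_snd hA hS).congr_deriv ?_
  rw [hS_eq, eq_div_of_mul_eq hd hA_eq]
  field_simp
  ring

end Lagrangian

/-- Lemma 1, case 2, Case III: the interior stationary point of the
multi-access Lagrangian, with both powers strictly positive. -/
theorem stmt_16 (g1 g2 β11 β12 : ℝ) (hg2 : 0 < g2) (hg : g2 < g1)
    (h1 : β12 * g2 < β11 * g1)
    (h2 : (g1 - g2) / (g1 * g2) < β12 - β11) :
    let P1s : ℝ := (β11 * g1 - β12 * g2) / Real.log 2 / (g1 - g2)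
    let P2s : ℝ := (β12 - β11) * g1 / Real.log 2 / (g1 - g2) - 1 / g2
    0 < P1s ∧ 0 < P2s ∧
    HasDerivAt (fun P1 : ℝ =>
        P1 + P2s - β11 * Real.logb 2 (1 + P1 * g1 / (1 + P2s * g2))
          - β12 * Real.logb 2 (1 + P2s * g2)) 0 P1s ∧
    HasDerivAt (fun P2 : ℝ =>
        P1s + P2 - β11 * Real.logb 2 (1 + P1s * g1 / (1 + P2 * g2))
          - β12 * Real.logb 2 (1 + P2 * g2)) 0 P2s := by
  intro P1s P2s
  have hL : 0 < log 2 := log_pos one_lt_two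
  have hd : 0 < g1 - g2 := sub_pos.mpr hg
  have hg1 : 0 < g1 := hg2.trans hg
  have hP1 : 0 < P1s := div_pos (div_pos (sub_pos.mpr h1) hL) hd
  have hA_eq : (1 + P2s * g2) * log 2 * (g1 - g2) = (β12 - β11) * g1 * g2 := by
    simp only [P2s]
    field_simp
    ring
  have hS_eq : (1 + P1s * g1 + P2s * g2) * log 2 = β11 * g1 := by
    simp only [P1s, P2s]
    field_simp
    ring
  have hAL : 1 < (1 + P2s * g2) * log 2 := by
    refine lt_of_mul_lt_mul_right ?_ hd.le
    rw [one_mul, hA_eq, mul_assoc]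
    exact (div_lt_iff₀ (mul_pos hg1 hg2)).mp h2
  have hP2 : 0 < P2s := by
    have hL1 : log 2 < 1 := lt_trans log_two_lt_d9 (by norm_num)
    have hA1 : 1 < 1 + P2s * g2 := by nlinarith
    exact pos_of_mul_pos_left (by linarith) hg2.le
  have hA : 0 < 1 + P2s * g2 := by positivity
  have hS : 0 < 1 + P1s * g1 + P2s * g2 := by positivity
  exact ⟨hP1, hP2, hasDerivAt_lagrangian_fst_eq_zero hA.ne' hS.ne' hS_eq,
    hasDerivAt_lagrangian_snd_eq_zero hA.ne' hS.ne' hg.ne' hS_eq hA_eq⟩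
end

section
/- For g1, g2 > 0, the PNC power-splitting with matched SNR, P_i = (2^R - 1/2)/g_i for i = 1, 2, satisfies: minimizing P1 + P2 - β·R over R (with β > 0) yields total power P1* + P2* = (β·log₂e - (1/2)(1/g1 + 1/g2))⁺ and individual powers P_i* = (β·log₂e·g_{3-i}/(g1+g2) - 1/(2·g_i))⁺ whenever the total is positive. -/
/-!
With `c = 1/g1 + 1/g2` the objective is `c·2^R - β·R - c/2`, a convex function of `R`.
The tangent-line bound `2^R ≥ 2^R₀·(1 + (R - R₀)·log 2)` (from `exp u ≥ 1 + u`) shows that it is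
minimized on `R ≥ -1` at `R₀ = log₂ (max (1/2) (β / (c·log 2)))`: the stationary point, or the
endpoint `-1` when the slope is already nonnegative there. Then `2^R₀ - 1/2 = (β/(c·log 2) - 1/2)⁺`,
and multiplying by `c`, resp. `1/g_i`, gives the powers since `1/(c·g1) = g2/(g1 + g2)`.
-/

open Real Set

lemma rpow_mul_one_add_sub_mul_log_le {b : ℝ} (hb : 0 < b) (x y : ℝ) :
    b ^ y * (1 + (x - y) * log b) ≤ b ^ x := by
  have hsplit : b ^ x = b ^ y * exp ((x - y) * log b) := by
    rw [mul_comm (x - y), ← rpow_def_of_pos hb, ← rpow_add hb, add_sub_cancel]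
  rw [hsplit]
  gcongr
  linarith [add_one_le_exp ((x - y) * log b)]

lemma le_logb_max_rpow {b : ℝ} (hb : 1 < b) (a t : ℝ) : a ≤ logb b (max (b ^ a) t) :=
  (le_logb_iff_rpow_le hb (lt_max_of_lt_left (by positivity))).2 (le_max_left _ _)

lemma isMinOn_mul_rpow_sub_mul {b c : ℝ} (hb : 1 < b) (hc : 0 < c) (β a : ℝ) :
    IsMinOn (fun R => c * b ^ R - β * R) (Ici a)
      (logb b (max (b ^ a) (β / (c * log b)))) := by
  set x := max (b ^ a) (β / (c * log b))
  have hlog : 0 < log b := log_pos hb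
  have hbx : b ^ logb b x = x :=
    rpow_logb (by linarith) hb.ne' (lt_max_of_lt_left (by positivity))
  intro R hR
  have hslope : 0 ≤ (R - logb b x) * (c * x * log b - β) := by
    rcases le_total (b ^ a) (β / (c * log b)) with h | h
    · have : c * x * log b = β := by
        simp only [x, max_eq_right h]; field_simp
      simp [this]
    · have hxa : x = b ^ a := max_eq_left h
      rw [hxa, logb_rpow (by linarith) hb.ne']
      refine mul_nonneg (sub_nonneg.2 hR) (sub_nonneg.2 ?_)
      rw [div_le_iff₀ (by positivity)] at h
      linarith
  have htangent := rpow_mul_one_add_sub_mul_log_le (zero_lt_one.trans hb) R (logb b x)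
  rw [hbx] at htangent
  show c * b ^ logb b x - β * logb b x ≤ c * b ^ R - β * R
  rw [hbx]
  nlinarith

lemma max_sub_mul_of_nonneg (a t : ℝ) {k : ℝ} (hk : 0 ≤ k) :
    (max a t - a) * k = max (t * k - a * k) 0 := by
  rw [← max_sub_sub_right, sub_self, max_mul_of_nonneg _ _ hk, zero_mul, sub_mul, max_comm]

theorem stmt_18_general (g1 g2 β : ℝ) (hg1 : 0 < g1) (hg2 : 0 < g2) :
    ∃ Rs : ℝ, Rs ∈ Set.Ici (-1 : ℝ) ∧
      IsMinOn
        (fun R : ℝ => ((2:ℝ) ^ R - 1/2) / g1 + ((2:ℝ) ^ R - 1/2) / g2 - β * R)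
        (Set.Ici (-1 : ℝ)) Rs ∧
      ((2:ℝ) ^ Rs - 1/2) / g1 + ((2:ℝ) ^ Rs - 1/2) / g2
        = max (β / Real.log 2 - (1/2) * (1 / g1 + 1 / g2)) 0 ∧
      (0 < max (β / Real.log 2 - (1/2) * (1 / g1 + 1 / g2)) 0 →
        ((2:ℝ) ^ Rs - 1/2) / g1
            = max (β / Real.log 2 * g2 / (g1 + g2) - 1 / (2 * g1)) 0 ∧
        ((2:ℝ) ^ Rs - 1/2) / g2
            = max (β / Real.log 2 * g1 / (g1 + g2) - 1 / (2 * g2)) 0) := by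
  have hc : 0 < 1 / g1 + 1 / g2 := by positivity
  have hhalf : (2:ℝ) ^ (-1 : ℝ) = 1 / 2 := by rw [rpow_neg_one]; norm_num
  have hmin := isMinOn_mul_rpow_sub_mul one_lt_two hc β (-1)
  set x := max ((2:ℝ) ^ (-1 : ℝ)) (β / ((1 / g1 + 1 / g2) * log 2))
  have hx : (2:ℝ) ^ logb 2 x = max (1 / 2) (β / ((1 / g1 + 1 / g2) * log 2)) := by
    rw [rpow_logb two_pos (by norm_num) (lt_max_of_lt_left (by positivity)), hhalf]
  have hlog : log 2 ≠ 0 := (log_pos one_lt_two).ne'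
  refine ⟨logb 2 x, le_logb_max_rpow one_lt_two _ _, ?_, ?_, fun _ => ⟨?_, ?_⟩⟩
  · intro R hR
    have h := hmin hR
    simp only [mem_ofPred_eq] at h ⊢
    linear_combination h
  · have hsum (y : ℝ) :
        (y - 1 / 2) / g1 + (y - 1 / 2) / g2 = (y - 1 / 2) * (1 / g1 + 1 / g2) := by
      ring
    rw [hx, hsum, max_sub_mul_of_nonneg _ _ hc.le]
    congr 2
    field_simp
  all_goals
    rw [hx, div_eq_mul_inv, max_sub_mul_of_nonneg _ _ (by positivity)]
    congr 2
    · field_simp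
      ring
    · ring

/-- Optimal PNC uplink power allocation: minimizing `P1 + P2 - β·R` over the
rates `R` with nonnegative matched powers `P_i = (2^R - 1/2)/g_i` (i.e. `R ≥ -1`)
yields total power `(β·log₂e - (1/2)(1/g1 + 1/g2))⁺` and individual powers
`P_i* = (β·log₂e·g_{3-i}/(g1+g2) - 1/(2g_i))⁺` whenever the total is positive. -/
theorem stmt_18 (g1 g2 β : ℝ) (hg1 : 0 < g1) (hg2 : 0 < g2) (hβ : 0 < β) :
    ∃ Rs : ℝ, Rs ∈ Set.Ici (-1 : ℝ) ∧
      IsMinOn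
        (fun R : ℝ => ((2:ℝ) ^ R - 1/2) / g1 + ((2:ℝ) ^ R - 1/2) / g2 - β * R)
        (Set.Ici (-1 : ℝ)) Rs ∧
      ((2:ℝ) ^ Rs - 1/2) / g1 + ((2:ℝ) ^ Rs - 1/2) / g2
        = max (β / Real.log 2 - (1/2) * (1 / g1 + 1 / g2)) 0 ∧
      (0 < max (β / Real.log 2 - (1/2) * (1 / g1 + 1 / g2)) 0 →
        ((2:ℝ) ^ Rs - 1/2) / g1
            = max (β / Real.log 2 * g2 / (g1 + g2) - 1 / (2 * g1)) 0 ∧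
        ((2:ℝ) ^ Rs - 1/2) / g2
            = max (β / Real.log 2 * g1 / (g1 + g2) - 1 / (2 * g2)) 0) :=
  stmt_18_general g1 g2 β hg1 hg2
end
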